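/- arXiv:1604.01183 — 4 statements merged into one kernel-verified Lean document; each statement's English description precedes it below -/
import Mathlib

section
/- Let ε ∈ (0, 1/8], δ = √ε, t_θ > δ√8, and let w_x, w_y ≥ 0 be real numbers with w_x > 0 satisfying w_y ≥ −ε + t_θ·w_x and w_x² + w_y² > δ². Then w_y/w_x ≥ t_θ/2. -/
theorem stmt_10 (ε δ t_θ w_x w_y : ℝ) (hε0 : 0 < ε) (hε : ε ≤ 1 / 8) (hδ : δ = Real.sqrt ε)
    (ht : δ * Real.sqrt 8 < t_θ) (hwx : 0 < w_x) (hwy : 0 ≤ w_y)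
    (hline : -ε + t_θ * w_x ≤ w_y) (hout : δ ^ 2 < w_x ^ 2 + w_y ^ 2) :
    t_θ / 2 ≤ w_y / w_x := by
  have hδ0 : 0 < δ := hδ ▸ Real.sqrt_pos.mpr hε0
  have hδ2 : δ ^ 2 = ε := by rw [hδ, Real.sq_sqrt hε0.le]
  set s := Real.sqrt 2 with hs
  have hs0 : 0 < s := Real.sqrt_pos.mpr (by norm_num)
  have hs2 : s ^ 2 = 2 := Real.sq_sqrt (by norm_num)
  have h8 : Real.sqrt 8 = 2 * s := by
    rw [hs, show (8:ℝ) = 2 ^ 2 * 2 by norm_num, Real.sqrt_mul (by positivity),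
      Real.sqrt_sq (by norm_num)]
  have ht' : δ * (2 * s) < t_θ := h8 ▸ ht
  rw [div_le_div_iff₀ (by norm_num) hwx]
  rcases le_or_gt (2 * ε) (t_θ * w_x) with hc | hc
  · nlinarith
  · -- t_θ * w_x < 2ε = 2δ²
    have htw : t_θ * w_x < 2 * δ ^ 2 := by rw [hδ2]; linarith
    have hx : s * w_x < δ := by
      have h1 : (δ * (2 * s)) * w_x < 2 * δ ^ 2 :=
        lt_of_le_of_lt (by nlinarith) htw
      nlinarith
    have hx2 : w_x ^ 2 < δ ^ 2 / 2 := by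
      have := mul_self_lt_mul_self (by positivity) hx
      nlinarith
    have hy2 : δ ^ 2 / 2 < w_y ^ 2 := by linarith
    have hy : δ < s * w_y := by
      refine lt_of_pow_lt_pow_left₀ 2 (by positivity) ?_
      nlinarith
    have hsδ : 2 * δ ≤ s := by nlinarith
    nlinarith
end

section
/- Let ε' > 0 in ℝ^d (d ≥ 2). Let B be the closed ball of radius ε' centered at c, let p' be a point on the boundary of B, and let p_ε = p' + ε'·u where u is the outward unit normal of B at p' (so p_ε is at distance ε' from p' along the line through the center and p'). Then the hyperplane through p' orthogonal to u intersects the convex hull conv(B ∪ {p_ε}) in a (d−1)-dimensional closed ball of radius ε'/√3 centered at p'. -/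
open RealInnerProductSpace

set_option maxHeartbeats 1000000 in
theorem stmt_13 (d : ℕ) (hd : 2 ≤ d) (ε' : ℝ) (hε' : 0 < ε')
    (c p' u pε : EuclideanSpace ℝ (Fin d)) (hp' : ‖p' - c‖ = ε')
    (hu : u = (ε')⁻¹ • (p' - c)) (hpε : pε = p' + ε' • u) :
    convexHull ℝ (Metric.closedBall c ε' ∪ {pε}) ∩ {x | ⟪x - p', u⟫ = 0} =
      Metric.closedBall p' (ε' / Real.sqrt 3) ∩ {x | ⟪x - p', u⟫ = 0} := by
  have hu1 : ‖u‖ = 1 := by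
    rw [hu, norm_smul, hp', Real.norm_eq_abs, abs_of_pos (inv_pos.2 hε'),
      inv_mul_cancel₀ hε'.ne']
  have huu : ⟪u, u⟫ = (1 : ℝ) := by
    rw [real_inner_self_eq_norm_sq, hu1]; norm_num
  have hpc : p' - c = ε' • u := by
    rw [hu, smul_smul, mul_inv_cancel₀ hε'.ne', one_smul]
  have hc : c = p' - ε' • u := by rw [← hpc]; abel
  have h3pos : (0:ℝ) < Real.sqrt 3 := Real.sqrt_pos.2 (by norm_num)
  have hr2 : (ε' / Real.sqrt 3) ^ 2 = ε' ^ 2 / 3 := by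
    rw [div_pow, Real.sq_sqrt]; norm_num
  have hrpos : 0 < ε' / Real.sqrt 3 := div_pos hε' h3pos
  have hull_eq : convexHull ℝ (Metric.closedBall c ε' ∪ {pε})
      = convexJoin ℝ (Metric.closedBall c ε') {pε} := by
    rw [(convex_closedBall c ε').convexHull_union (convex_singleton pε)
      (Metric.nonempty_closedBall.2 hε'.le) (Set.singleton_nonempty pε)]
  ext x
  simp only [Set.mem_inter_iff, Set.mem_setOf_eq, Metric.mem_closedBall, hull_eq,
    mem_convexJoin, dist_eq_norm]
  constructor
  · rintro ⟨⟨b, hb, q, hq, a₁, a₂, ha₁, ha₂, hsum, rfl⟩, hxu⟩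
    rw [Set.mem_singleton_iff] at hq
    subst hq
    refine ⟨?_, hxu⟩
    have ha1 : a₁ = 1 - a₂ := by linarith
    subst ha1
    have hwle : ‖b - c‖ ≤ ε' := by
      simpa [Metric.mem_closedBall, dist_eq_norm] using hb
    have hb' : b = (b - c) + p' - ε' • u := by rw [hc]; abel
    have hy : ((1 - a₂) • b + a₂ • q) - p'
        = (1 - a₂) • (b - c) + ((a₂ - (1 - a₂)) * ε') • u := by
      conv_lhs => rw [hb', hpε]
      module
    rw [hy] at hxu ⊢
    have hcon : (1 - a₂) * ⟪b - c, u⟫ + (a₂ - (1 - a₂)) * ε' = 0 := by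
      rw [inner_add_left, real_inner_smul_left, real_inner_smul_left, huu, mul_one] at hxu
      exact hxu
    have hnorm : ‖(1 - a₂) • (b - c) + ((a₂ - (1 - a₂)) * ε') • u‖ ^ 2
        = (1 - a₂) ^ 2 * ‖b - c‖ ^ 2
          + 2 * ((1 - a₂) * ((a₂ - (1 - a₂)) * ε')) * ⟪b - c, u⟫
          + ((a₂ - (1 - a₂)) * ε') ^ 2 := by
      rw [norm_add_sq_real, real_inner_smul_left, real_inner_smul_right, norm_smul,
        norm_smul, hu1, mul_one, Real.norm_eq_abs, Real.norm_eq_abs, mul_pow, sq_abs, sq_abs]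
      ring
    have hT : (1 - a₂) * ⟪b - c, u⟫ = -((a₂ - (1 - a₂)) * ε') := by linarith
    have hcross : 2 * ((1 - a₂) * ((a₂ - (1 - a₂)) * ε')) * ⟪b - c, u⟫
        = -2 * ((a₂ - (1 - a₂)) * ε') ^ 2 := by
      linear_combination 2 * ((a₂ - (1 - a₂)) * ε') * hT
    have hW2 : ‖b - c‖ ^ 2 ≤ ε' ^ 2 := by nlinarith [norm_nonneg (b - c)]
    have hstep : ‖(1 - a₂) • (b - c) + ((a₂ - (1 - a₂)) * ε') • u‖ ^ 2 ≤ ε' ^ 2 / 3 := by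
      nlinarith [mul_le_mul_of_nonneg_left hW2 (sq_nonneg (1 - a₂)),
        mul_nonneg (sq_nonneg ε') (sq_nonneg (3 * a₂ - 1))]
    nlinarith [norm_nonneg ((1 - a₂) • (b - c) + ((a₂ - (1 - a₂)) * ε') • u),
      hrpos, hr2, hstep]
  · rintro ⟨hx, hxu⟩
    refine ⟨?_, hxu⟩
    have hbc : ((3/2 : ℝ) • x - (1/2 : ℝ) • pε) - c
        = (3/2 : ℝ) • (x - p') + (ε' / 2) • u := by
      rw [hpε, hc]; module
    have hx2 : ‖x - p'‖ ^ 2 ≤ ε' ^ 2 / 3 := by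
      nlinarith [norm_nonneg (x - p'), hrpos, hr2]
    have hbnorm : ‖((3/2 : ℝ) • x - (1/2 : ℝ) • pε) - c‖ ^ 2 ≤ ε' ^ 2 := by
      rw [hbc, norm_add_sq_real]
      have hinner : ⟪(3/2 : ℝ) • (x - p'), (ε' / 2) • u⟫ = 0 := by
        rw [real_inner_smul_left, real_inner_smul_right, hxu]; ring
      rw [hinner, norm_smul, norm_smul, hu1, mul_one, Real.norm_eq_abs, Real.norm_eq_abs,
        mul_pow, sq_abs, sq_abs]
      nlinarith [norm_nonneg (x - p')]
    have hbmem : (3/2 : ℝ) • x - (1/2 : ℝ) • pε ∈ Metric.closedBall c ε' := by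
      rw [Metric.mem_closedBall, dist_eq_norm]
      nlinarith [norm_nonneg (((3/2 : ℝ) • x - (1/2 : ℝ) • pε) - c)]
    exact ⟨(3/2 : ℝ) • x - (1/2 : ℝ) • pε, hbmem, pε, Set.mem_singleton pε,
      2/3, 1/3, by norm_num, by norm_num, by norm_num, by module⟩
end

section
/- Let K ⊆ ℝ^d be a convex body contained in a ball of radius 1/2 centered at the origin, and let 0 < ε ≤ 1. Let S be the sphere of radius 3 centered at the origin (the Dudley sphere). Let z, x ∈ S with ‖z − x‖ ≤ √ε/4, and let z₀ = proj_K(z) and x₀ = proj_K(x) be their nearest points on K. Then: (i) ‖z₀ − x₀‖ ≤ √ε/4, and (ii) the supporting hyperplane of K at x₀ with normal direction (x − x₀) intersects the segment from z to z₀ at a point whose distance from z₀ is less than ε. -/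
open RealInnerProductSpace

/-!
Both parts rest on the variational inequality `⟪u - P u, w - P u⟫ ≤ 0` (`w ∈ K`) for the
nearest-point map `P` of a convex set. Adding it at `z` and at `x` gives
`‖z₀ - x₀‖² ≤ ⟪z - x, z₀ - x₀⟫`, hence (i). For (ii), with `n = x - x₀` the segment
`z₀ + t • (z - z₀)` crosses the hyperplane at `t = -⟪z₀ - x₀, n⟫ / ⟪z - z₀, n⟫`. The numerator is
at most `‖z - x‖² ≤ ε / 16`; the denominator is at least `5`, because `‖z - z₀‖ ≥ 5 / 2` while
`z - z₀` and `n` differ by at most `1 / 2`. So the crossing point is within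
`ε / 80 * (7 / 2) < ε` of `z₀`.
-/

section InnerProductSpace

variable {F : Type*} [NormedAddCommGroup F] [InnerProductSpace ℝ F]

theorem real_inner_sub_le_zero_of_forall_dist_le {K : Set F} (hK : Convex ℝ K) {u v : F}
    (hv : v ∈ K) (hmin : ∀ y ∈ K, dist u v ≤ dist u y) : ∀ w ∈ K, ⟪u - v, w - v⟫ ≤ 0 := by
  have : Nonempty K := ⟨⟨v, hv⟩⟩
  refine (norm_eq_iInf_iff_real_inner_le_zero hK hv).1 (le_antisymm ?_ ?_)
  · exact le_ciInf fun w => by simpa only [dist_eq_norm] using hmin w w.2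
  · have hbdd : BddBelow (Set.range fun w : K => ‖u - w‖) :=
      ⟨0, by rintro _ ⟨w, rfl⟩; exact norm_nonneg _⟩
    exact ciInf_le hbdd ⟨v, hv⟩

theorem norm_sub_le_of_real_inner_le_zero {z x z₀ x₀ : F} (hz : ⟪z - z₀, x₀ - z₀⟫ ≤ 0)
    (hx : ⟪x - x₀, z₀ - x₀⟫ ≤ 0) : ‖z₀ - x₀‖ ≤ ‖z - x‖ := by
  have hsplit : ⟪z - x, z₀ - x₀⟫ = ⟪z₀ - x₀, z₀ - x₀⟫ - ⟪z - z₀, x₀ - z₀⟫ - ⟪x - x₀, z₀ - x₀⟫ := by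
    simp only [inner_sub_left, inner_sub_right, real_inner_comm]; ring
  have hcs := real_inner_le_norm (z - x) (z₀ - x₀)
  rw [real_inner_self_eq_norm_sq] at hsplit
  by_contra! h
  nlinarith [norm_nonneg (z - x)]

theorem neg_sq_norm_sub_le_real_inner_sub {z x z₀ x₀ : F} (hz : ⟪z - z₀, x₀ - z₀⟫ ≤ 0)
    (hx : ⟪x - x₀, z₀ - x₀⟫ ≤ 0) : -‖z - x‖ ^ 2 ≤ ⟪z₀ - x₀, x - x₀⟫ := by
  have hsplit : ⟪z₀ - x₀, x - x₀⟫ = ⟪z₀ - x₀, z₀ - x₀⟫ - ⟪z₀ - x₀, z - x⟫ - ⟪z - z₀, x₀ - z₀⟫ := by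
    simp only [inner_sub_left, inner_sub_right, real_inner_comm]; ring
  have hcs := real_inner_le_norm (z₀ - x₀) (z - x)
  have hlip := norm_sub_le_of_real_inner_le_zero hz hx
  nlinarith [real_inner_self_nonneg (x := z₀ - x₀), norm_nonneg (z₀ - x₀)]

theorem sq_norm_sub_norm_mul_norm_sub_le_real_inner (u v : F) :
    ‖u‖ ^ 2 - ‖u‖ * ‖u - v‖ ≤ ⟪u, v⟫ := by
  have hcs := real_inner_le_norm u (u - v)
  rw [inner_sub_right, real_inner_self_eq_norm_sq] at hcs
  linarith

theorem exists_mem_segment_real_inner_sub_eq_zero {p q c n : F} (hpq : 0 < ⟪p - q, n⟫)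
    (hq : ⟪q - c, n⟫ ≤ 0) (hp : -⟪q - c, n⟫ ≤ ⟪p - q, n⟫) :
    ∃ w ∈ segment ℝ p q, ⟪w - c, n⟫ = 0 ∧
      dist w q = -⟪q - c, n⟫ / ⟪p - q, n⟫ * ‖p - q‖ := by
  set t := -⟪q - c, n⟫ / ⟪p - q, n⟫
  have ht0 : 0 ≤ t := div_nonneg (neg_nonneg.2 hq) hpq.le
  have ht1 : t ≤ 1 := (div_le_one hpq).2 hp
  refine ⟨q + t • (p - q), ⟨t, 1 - t, ht0, by linarith, by ring, by module⟩, ?_, ?_⟩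
  · rw [show q + t • (p - q) - c = (q - c) + t • (p - q) by abel, inner_add_left,
      real_inner_smul_left, div_mul_cancel₀ _ hpq.ne']
    ring
  · rw [dist_eq_norm, add_sub_cancel_left, norm_smul, Real.norm_of_nonneg ht0]

end InnerProductSpace

theorem stmt_15_general (d : ℕ) (K : Set (EuclideanSpace ℝ (Fin d)))
    (hconv : Convex ℝ K)
    (hK : K ⊆ Metric.closedBall (0 : EuclideanSpace ℝ (Fin d)) (1 / 2))
    (ε : ℝ) (hε0 : 0 < ε) (hε1 : ε ≤ 1)
    (z x : EuclideanSpace ℝ (Fin d))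
    (hz : z ∈ Metric.sphere (0 : EuclideanSpace ℝ (Fin d)) 3)
    (hzx : ‖z - x‖ ≤ Real.sqrt ε / 4)
    (z₀ x₀ : EuclideanSpace ℝ (Fin d))
    (hz₀K : z₀ ∈ K) (hz₀min : ∀ y ∈ K, dist z z₀ ≤ dist z y)
    (hx₀K : x₀ ∈ K) (hx₀min : ∀ y ∈ K, dist x x₀ ≤ dist x y) :
    ‖z₀ - x₀‖ ≤ Real.sqrt ε / 4 ∧
      ∃ w ∈ segment ℝ z z₀, ⟪w - x₀, x - x₀⟫ = 0 ∧ dist w z₀ < ε := by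
  have hz₀ := real_inner_sub_le_zero_of_forall_dist_le hconv hz₀K hz₀min x₀ hx₀K
  have hx₀ := real_inner_sub_le_zero_of_forall_dist_le hconv hx₀K hx₀min z₀ hz₀K
  have hlip : ‖z₀ - x₀‖ ≤ ‖z - x‖ := norm_sub_le_of_real_inner_le_zero hz₀ hx₀
  refine ⟨hlip.trans hzx, ?_⟩
  have hzx' : ‖z - x‖ ≤ 1 / 4 := hzx.trans (by linarith [Real.sqrt_le_one.2 hε1])
  have hzn : ‖z‖ = 3 := by simpa using hz
  have hz₀n : ‖z₀‖ ≤ 1 / 2 := by simpa using hK hz₀K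
  have hr : 5 / 2 ≤ ‖z - z₀‖ := by linarith [norm_sub_norm_le z z₀]
  have hr' : ‖z - z₀‖ ≤ 7 / 2 := by linarith [norm_sub_le z z₀]
  have hb : 5 ≤ ⟪z - z₀, x - x₀⟫ := by
    have hv : ‖(z - z₀) - (x - x₀)‖ ≤ 1 / 2 := by
      calc ‖(z - z₀) - (x - x₀)‖ = ‖(z - x) - (z₀ - x₀)‖ := by congr 1; abel
        _ ≤ ‖z - x‖ + ‖z₀ - x₀‖ := norm_sub_le _ _
        _ ≤ 1 / 2 := by linarith
    nlinarith [sq_norm_sub_norm_mul_norm_sub_le_real_inner (z - z₀) (x - x₀)]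
  have hzx_sq : ‖z - x‖ ^ 2 ≤ ε / 16 :=
    calc ‖z - x‖ ^ 2 ≤ (Real.sqrt ε / 4) ^ 2 := by gcongr
      _ = ε / 16 := by rw [div_pow, Real.sq_sqrt hε0.le]; norm_num
  have ha : -⟪z₀ - x₀, x - x₀⟫ ≤ ε / 16 := by
    linarith [neg_sq_norm_sub_le_real_inner_sub hz₀ hx₀]
  have hq : ⟪z₀ - x₀, x - x₀⟫ ≤ 0 := by rwa [real_inner_comm]
  obtain ⟨w, hw, hwx, hwz⟩ :=
    exists_mem_segment_real_inner_sub_eq_zero (by linarith : 0 < ⟪z - z₀, x - x₀⟫) hq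
      (by linarith)
  refine ⟨w, hw, hwx, hwz ▸ ?_⟩
  calc -⟪z₀ - x₀, x - x₀⟫ / ⟪z - z₀, x - x₀⟫ * ‖z - z₀‖ ≤ ε / 16 / 5 * (7 / 2) := by
        gcongr
    _ < ε := by linarith

theorem stmt_15 (d : ℕ) (K : Set (EuclideanSpace ℝ (Fin d)))
    (hconv : Convex ℝ K) (hcomp : IsCompact K) (hint : (interior K).Nonempty)
    (hK : K ⊆ Metric.closedBall (0 : EuclideanSpace ℝ (Fin d)) (1 / 2))
    (ε : ℝ) (hε0 : 0 < ε) (hε1 : ε ≤ 1)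
    (z x : EuclideanSpace ℝ (Fin d))
    (hz : z ∈ Metric.sphere (0 : EuclideanSpace ℝ (Fin d)) 3)
    (hx : x ∈ Metric.sphere (0 : EuclideanSpace ℝ (Fin d)) 3)
    (hzx : ‖z - x‖ ≤ Real.sqrt ε / 4)
    (z₀ x₀ : EuclideanSpace ℝ (Fin d))
    (hz₀K : z₀ ∈ K) (hz₀min : ∀ y ∈ K, dist z z₀ ≤ dist z y)
    (hx₀K : x₀ ∈ K) (hx₀min : ∀ y ∈ K, dist x x₀ ≤ dist x y) :
    ‖z₀ - x₀‖ ≤ Real.sqrt ε / 4 ∧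
      ∃ w ∈ segment ℝ z z₀, ⟪w - x₀, x - x₀⟫ = 0 ∧ dist w z₀ < ε :=
  stmt_15_general d K hconv hK ε hε0 hε1 z x hz hzx z₀ x₀ hz₀K hz₀min hx₀K hx₀min
end

section
/- Let K ⊆ ℝ^d be a nonempty closed convex set, let ε' > 0, and let K' = K ⊕ ε'. Let q'' ∈ ℝ^d with dist(q'', K) > ε', let q' = proj_{K'}(q'') be the nearest point to q'' in K', and let q = proj_K(q') be the nearest point to q' in K. Then q is also the nearest point to q'' in K, i.e., proj_K(q'') = proj_K(proj_{K'}(q'')). -/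
theorem stmt_17 (d : ℕ) (K : Set (EuclideanSpace ℝ (Fin d)))
    (hne : K.Nonempty) (hcl : IsClosed K) (hconv : Convex ℝ K)
    (ε' : ℝ) (hε' : 0 < ε')
    (K' : Set (EuclideanSpace ℝ (Fin d))) (hK' : K' = {y | Metric.infDist y K ≤ ε'})
    (q'' : EuclideanSpace ℝ (Fin d)) (hq'' : ε' < Metric.infDist q'' K)
    (q' : EuclideanSpace ℝ (Fin d)) (hq'K' : q' ∈ K')
    (hq'min : ∀ y ∈ K', dist q'' q' ≤ dist q'' y)
    (q : EuclideanSpace ℝ (Fin d)) (hqK : q ∈ K)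
    (hqmin : ∀ y ∈ K, dist q' q ≤ dist q' y) :
    ∀ y ∈ K, dist q'' q ≤ dist q'' y := by
  intro y hy
  set D := Metric.infDist q'' K with hD
  have hD0 : 0 < D := lt_trans hε' hq''
  obtain ⟨p, hpK, hp⟩ := hcl.exists_infDist_eq_dist hne q''
  set r : EuclideanSpace ℝ (Fin d) := p + (ε' / D) • (q'' - p) with hr
  have hnorm : ‖q'' - p‖ = D := by rw [← dist_eq_norm, ← hp]
  have hrp : dist r p = ε' := by
    rw [dist_eq_norm, hr, add_sub_cancel_left, norm_smul, Real.norm_eq_abs,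
      abs_of_pos (by positivity), hnorm]
    field_simp
  have hqr : dist q'' r = D - ε' := by
    have : q'' - r = (1 - ε' / D) • (q'' - p) := by
      rw [hr]; module
    rw [dist_eq_norm, this, norm_smul, Real.norm_eq_abs, hnorm,
      abs_of_nonneg (by rw [sub_nonneg]; exact (div_le_one hD0).2 hq''.le)]
    field_simp
  have hrK' : r ∈ K' := by
    rw [hK']
    exact le_trans (Metric.infDist_le_dist_of_mem hpK) (le_of_eq hrp)
  have h1 : dist q'' q' ≤ D - ε' := (hq'min r hrK').trans_eq hqr
  obtain ⟨k, hkK, hk⟩ := hcl.exists_infDist_eq_dist hne q'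
  have h2 : dist q' q ≤ ε' := by
    rw [hK'] at hq'K'
    exact (hqmin k hkK).trans (hk ▸ hq'K')
  calc dist q'' q ≤ dist q'' q' + dist q' q := dist_triangle _ _ _
    _ ≤ (D - ε') + ε' := add_le_add h1 h2
    _ = D := by ring
    _ ≤ dist q'' y := Metric.infDist_le_dist_of_mem hy
end
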